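/- Let a₁ ≥ a₀ > 0 and let p be a probability distribution of a random variable A taking finitely many values in [a₀, a₁] with E_p[A] = ā. Let q be a probability distribution on k-tuples of strictly positive reals such that the fidelity F(p^{⊗k}, q) ≥ δ^{k/2} for some δ ∈ [0,1]. Then E_q[∏_{l=1}^k A_l] ≥ (δ a₀ a₁ / (a₀ + a₁ − ā))^k. -/

import Mathlib

/-!
By Cauchy–Schwarz, `F(p^{⊗k}, q)² ≤ E_{p^{⊗k}}[1/∏ A_l] · E_q[∏ A_l]`, and the first factor
is `(E_p[1/A])^k` by independence. On `[a₀, a₁]` the convex function `1/x` lies below its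
chord, `1/x ≤ (a₀ + a₁ - x)/(a₀ a₁)`, so `E_p[1/A] ≤ (a₀ + a₁ - ā)/(a₀ a₁)`. Combining with
`F(p^{⊗k}, q)² ≥ δ^k` gives the bound.
-/

open Finset

theorem sq_sum_sqrt_mul_le_sum_div_mul_sum_mul {κ : Type*} (s : Finset κ) {u v w : κ → ℝ}
    (hu : ∀ t, 0 ≤ u t) (hv : ∀ t, 0 ≤ v t) (hw : ∀ t, 0 < w t) :
    (∑ t ∈ s, √(u t * v t)) ^ 2 ≤ (∑ t ∈ s, u t / w t) * ∑ t ∈ s, v t * w t := by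
  have hsplit : ∀ t, √(u t * v t) = √(u t / w t) * √(v t * w t) := fun t => by
    rw [← Real.sqrt_mul (div_nonneg (hu t) (hw t).le)]
    congr 1
    field_simp [(hw t).ne']
  have hCS := Real.sum_sqrt_mul_sqrt_le s (fun t => div_nonneg (hu t) (hw t).le)
    (fun t => mul_nonneg (hv t) (hw t).le)
  simp_rw [hsplit]
  calc (∑ t ∈ s, √(u t / w t) * √(v t * w t)) ^ 2
      ≤ (√(∑ t ∈ s, u t / w t) * √(∑ t ∈ s, v t * w t)) ^ 2 :=
        pow_le_pow_left₀ (sum_nonneg fun t _ => by positivity) hCS 2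
    _ = _ := by
        rw [mul_pow, Real.sq_sqrt (sum_nonneg fun t _ => div_nonneg (hu t) (hw t).le),
          Real.sq_sqrt (sum_nonneg fun t _ => mul_nonneg (hv t) (hw t).le)]

theorem inv_le_chord_of_mem_Icc {a₀ a₁ x : ℝ} (h0 : 0 < a₀) (hx : x ∈ Set.Icc a₀ a₁) :
    x⁻¹ ≤ (a₀ + a₁ - x) / (a₀ * a₁) := by
  obtain ⟨hx0, hx1⟩ := hx
  have hx_pos : 0 < x := h0.trans_le hx0
  rw [inv_eq_one_div, div_le_div_iff₀ hx_pos (mul_pos h0 (hx_pos.trans_le hx1))]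
  nlinarith [mul_nonneg (sub_nonneg.2 hx0) (sub_nonneg.2 hx1)]

theorem sum_div_le_chord_of_mem_Icc {ι : Type*} (s : Finset ι) {p a : ι → ℝ} {a₀ a₁ : ℝ}
    (h0 : 0 < a₀) (hrange : ∀ i, a i ∈ Set.Icc a₀ a₁) (hp0 : ∀ i, 0 ≤ p i)
    (hp1 : ∑ i ∈ s, p i = 1) :
    ∑ i ∈ s, p i / a i ≤ (a₀ + a₁ - ∑ i ∈ s, p i * a i) / (a₀ * a₁) :=
  calc ∑ i ∈ s, p i / a i
      ≤ ∑ i ∈ s, p i * ((a₀ + a₁ - a i) / (a₀ * a₁)) :=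
        sum_le_sum fun i _ =>
          mul_le_mul_of_nonneg_left (inv_le_chord_of_mem_Icc h0 (hrange i)) (hp0 i)
    _ = ((∑ i ∈ s, p i) * (a₀ + a₁) - ∑ i ∈ s, p i * a i) / (a₀ * a₁) := by
        rw [sum_mul, ← sum_sub_distrib, sum_div]
        exact sum_congr rfl fun i _ => by ring
    _ = _ := by rw [hp1, one_mul]

theorem product_expectation_fidelity_general {ι : Type*} [Fintype ι] (k : ℕ)
    (a : ι → ℝ) (p : ι → ℝ) (a₀ a₁ abar : ℝ)
    (h0 : 0 < a₀) (h01 : a₀ ≤ a₁)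
    (hrange : ∀ i, a i ∈ Set.Icc a₀ a₁)
    (hp0 : ∀ i, 0 ≤ p i) (hp1 : ∑ i, p i = 1)
    (hmean : ∑ i, p i * a i = abar)
    (q : (Fin k → ι) → ℝ) (hq0 : ∀ t, 0 ≤ q t)
    (δ : ℝ) (hδ0 : 0 ≤ δ)
    (hF : Real.sqrt δ ^ k ≤ ∑ t, Real.sqrt ((∏ l, p (t l)) * q t)) :
    (δ * a₀ * a₁ / (a₀ + a₁ - abar)) ^ k ≤ ∑ t, q t * ∏ l, a (t l) := by
  have ha_pos : ∀ i, 0 < a i := fun i => h0.trans_le (hrange i).1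
  have habar_le : abar ≤ a₁ := hmean ▸ calc
    ∑ i, p i * a i ≤ ∑ i, p i * a₁ :=
        sum_le_sum fun i _ => mul_le_mul_of_nonneg_left (hrange i).2 (hp0 i)
    _ = a₁ := by rw [← sum_mul, hp1, one_mul]
  set C := (a₀ + a₁ - abar) / (a₀ * a₁)
  have hC_pos : 0 < C := div_pos (by linarith) (mul_pos h0 (h0.trans_le h01))
  have hinv_mean : ∑ i, p i / a i ≤ C := by
    simpa only [hmean] using sum_div_le_chord_of_mem_Icc univ h0 hrange hp0 hp1
  have hfid_sq : δ ^ k ≤ (∑ i, p i / a i) ^ k * ∑ t, q t * ∏ l, a (t l) :=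
    calc δ ^ k = (√δ ^ k) ^ 2 := by rw [← pow_mul, mul_comm, pow_mul, Real.sq_sqrt hδ0]
      _ ≤ (∑ t, √((∏ l, p (t l)) * q t)) ^ 2 := pow_le_pow_left₀ (by positivity) hF 2
      _ ≤ _ := by
        rw [Fintype.sum_pow (fun i => p i / a i)]
        simp_rw [prod_div_distrib]
        exact sq_sum_sqrt_mul_le_sum_div_mul_sum_mul univ
          (fun t => prod_nonneg fun l _ => hp0 (t l)) hq0 fun t => prod_pos fun l _ => ha_pos (t l)
  have hE_nonneg : 0 ≤ ∑ t, q t * ∏ l, a (t l) :=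
    sum_nonneg fun t _ => mul_nonneg (hq0 t) (prod_nonneg fun l _ => (ha_pos (t l)).le)
  rw [show δ * a₀ * a₁ / (a₀ + a₁ - abar) = δ / C by rw [div_div_eq_mul_div, mul_assoc],
    div_pow, div_le_iff₀ (by positivity), mul_comm]
  refine hfid_sq.trans (by gcongr; exact sum_nonneg fun i _ => div_nonneg (hp0 i) (ha_pos i).le)

/-- Product fidelity–expectation bound (Corollary `expectation-fidelity`):
if `F(p^{⊗k}, q) ≥ δ^{k/2}` then `E_q[∏ A_l] ≥ (δ a₀ a₁/(a₀+a₁−ā))^k`. -/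
theorem product_expectation_fidelity {ι : Type*} [Fintype ι] (k : ℕ)
    (a : ι → ℝ) (p : ι → ℝ) (a₀ a₁ abar : ℝ)
    (h0 : 0 < a₀) (h01 : a₀ ≤ a₁)
    (hrange : ∀ i, a i ∈ Set.Icc a₀ a₁)
    (hp0 : ∀ i, 0 ≤ p i) (hp1 : ∑ i, p i = 1)
    (hmean : ∑ i, p i * a i = abar)
    (q : (Fin k → ι) → ℝ) (hq0 : ∀ t, 0 ≤ q t) (hq1 : ∑ t, q t = 1)
    (δ : ℝ) (hδ0 : 0 ≤ δ) (hδ1 : δ ≤ 1)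
    (hF : Real.sqrt δ ^ k ≤ ∑ t, Real.sqrt ((∏ l, p (t l)) * q t)) :
    (δ * a₀ * a₁ / (a₀ + a₁ - abar)) ^ k ≤ ∑ t, q t * ∏ l, a (t l) :=
  product_expectation_fidelity_general k a p a₀ a₁ abar h0 h01 hrange hp0 hp1 hmean q hq0 δ hδ0 hF
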